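/- arXiv:0905.0085 — 6 statements merged into one kernel-verified Lean document; each statement's English description precedes it below -/
import Mathlib

section
/- There exists a balanced weighing scheme M : Fin 3 → Fin 12 → ℤ for 12 coins using 3 weighings, in which each weighing places exactly 4 coins on the left pan and exactly 4 coins on the right pan, that identifies the counterfeit. In particular, among 12 coins that are identical in all respects except that exactly one unknown coin differs from the rest in weight only (it may be heavier or lighter), at most three uses of a two-pan scale balance suffice to determine deterministically both which coin is the counterfeit and whether it is heavier or lighter than the genuine coins. -/
/-- A weighing scheme: every entry lies in {-1, 0, 1}. -/
def IsScheme {k n : ℕ} (M : Fin k → Fin n → ℤ) : Prop :=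
  ∀ j i, M j i ∈ ({-1, 0, 1} : Set ℤ)

/-- A scheme is balanced: each weighing puts equally many coins on each pan. -/
def IsBalanced {k n : ℕ} (M : Fin k → Fin n → ℤ) : Prop :=
  ∀ j, (Finset.univ.filter (fun i => M j i = 1)).card =
       (Finset.univ.filter (fun i => M j i = -1)).card

/-- A counterfeit scenario: genuine weight `g`, counterfeit coin `c`, weights `w`. -/
def IsScenario {n : ℕ} (g : ℝ) (c : Fin n) (w : Fin n → ℝ) : Prop :=
  (∀ i, i ≠ c → w i = g) ∧ w c ≠ g

/-- The scheme identifies the counterfeit coin and its weight deviation. -/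
def Identifies {k n : ℕ} (M : Fin k → Fin n → ℤ) : Prop :=
  ∀ (g : ℝ) (c : Fin n) (w : Fin n → ℝ) (g' : ℝ) (c' : Fin n) (w' : Fin n → ℝ),
    IsScenario g c w → IsScenario g' c' w' →
    (∀ j, Real.sign (∑ i, (M j i : ℝ) * w i) = Real.sign (∑ i, (M j i : ℝ) * w' i)) →
    c = c' ∧ Real.sign (w c - g) = Real.sign (w' c' - g')


def Mw : Fin 3 → Fin 12 → ℤ :=
  ![![-1, -1, -1, 1, 1, 1, -1, 1, 0, 0, 0, 0],
    ![-1, -1, 0, 0, 0, -1, 1, -1, 1, 1, 1, 0],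
    ![0, 1, -1, 0, -1, 1, 0, -1, 1, 0, -1, 1]]

def zB (b : Bool) : ℤ := if b then 1 else -1

lemma Mw_key : ∀ (c c' : Fin 12) (s s' : Bool),
    (∀ j, Mw j c * zB s = Mw j c' * zB s') → c = c' ∧ s = s' := by decide

lemma Mw_mem : ∀ j i, Mw j i = -1 ∨ Mw j i = 0 ∨ Mw j i = 1 := by decide

lemma Mw_rowsum : ∀ j, ∑ i, Mw j i = 0 := by decide

lemma sum_eq (g : ℝ) (c : Fin 12) (w : Fin 12 → ℝ) (h : ∀ i, i ≠ c → w i = g)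
    (j : Fin 3) : ∑ i, (Mw j i : ℝ) * w i = (Mw j c : ℝ) * (w c - g) := by
  have : ∑ i, (Mw j i : ℝ) * w i
      = ∑ i, ((Mw j i : ℝ) * (w i - g) + (Mw j i : ℝ) * g) := by
    apply Finset.sum_congr rfl; intro i _; ring
  rw [this, Finset.sum_add_distrib, ← Finset.sum_mul]
  have h2 : ∑ i, ((Mw j i : ℝ)) = 0 := by
    rw [← Int.cast_sum, Mw_rowsum]; simp
  rw [h2, zero_mul, add_zero]
  rw [Finset.sum_eq_single c]
  · intro i _ hi; rw [h i hi]; simp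
  · simp

/-- There is a balanced weighing scheme for 12 coins using 3 weighings, each
weighing placing exactly 4 coins on each pan, that identifies the counterfeit. -/
theorem twelve_coins_three_weighings :
    ∃ M : Fin 3 → Fin 12 → ℤ,
      IsScheme M ∧
      (∀ j, (Finset.univ.filter (fun i => M j i = 1)).card = 4 ∧
            (Finset.univ.filter (fun i => M j i = -1)).card = 4) ∧
      Identifies M := by
  refine ⟨Mw, ?_, by decide, ?_⟩
  · intro j i
    rcases Mw_mem j i with h | h | h <;> simp [h]
  intro g c w g' c' w' hs hs' hout
  have hd : w c - g ≠ 0 := sub_ne_zero.mpr hs.2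
  have hd' : w' c' - g' ≠ 0 := sub_ne_zero.mpr hs'.2
  have hkey : ∀ j, (Mw j c : ℝ) * Real.sign (w c - g)
      = (Mw j c' : ℝ) * Real.sign (w' c' - g') := by
    intro j
    have h1 := hout j
    rw [sum_eq g c w hs.1 j, sum_eq g' c' w' hs'.1 j] at h1
    have hsgn : ∀ (m : ℤ), (m = -1 ∨ m = 0 ∨ m = 1) → ∀ x : ℝ,
        Real.sign ((m : ℝ) * x) = (m : ℝ) * Real.sign x := by
      rintro m (rfl | rfl | rfl) x
      · push_cast; rw [neg_one_mul, neg_one_mul, Real.sign_neg]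
      · simp [Real.sign_zero]
      · simp
    rw [hsgn _ (Mw_mem j c) _, hsgn _ (Mw_mem j c') _] at h1
    exact h1
  rcases hd.lt_or_gt with hlt | hgt <;> rcases hd'.lt_or_gt with hlt' | hgt'
  · have hb : ∀ j, Mw j c * zB false = Mw j c' * zB false := by
      intro j
      have := hkey j
      rw [Real.sign_of_neg hlt, Real.sign_of_neg hlt'] at this
      have hI : Mw j c = Mw j c' := by exact_mod_cast (show ((Mw j c : ℤ) : ℝ) = ((Mw j c' : ℤ) : ℝ) by push_cast; linarith)
      simp [zB, hI] <;> ring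
    obtain ⟨h1, _⟩ := Mw_key c c' false false hb
    exact ⟨h1, by rw [Real.sign_of_neg hlt, Real.sign_of_neg hlt']⟩
  · have hb : ∀ j, Mw j c * zB false = Mw j c' * zB true := by
      intro j
      have := hkey j
      rw [Real.sign_of_neg hlt, Real.sign_of_pos hgt'] at this
      have hI : Mw j c = -Mw j c' := by exact_mod_cast (show ((Mw j c : ℤ) : ℝ) = ((-Mw j c' : ℤ) : ℝ) by push_cast; linarith)
      simp [zB, hI] <;> ring
    obtain ⟨_, h2⟩ := Mw_key c c' false true hb
    simp at h2
  · have hb : ∀ j, Mw j c * zB true = Mw j c' * zB false := by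
      intro j
      have := hkey j
      rw [Real.sign_of_pos hgt, Real.sign_of_neg hlt'] at this
      have hI : Mw j c = -Mw j c' := by exact_mod_cast (show ((Mw j c : ℤ) : ℝ) = ((-Mw j c' : ℤ) : ℝ) by push_cast; linarith)
      simp [zB, hI] <;> ring
    obtain ⟨_, h2⟩ := Mw_key c c' true false hb
    simp at h2
  · have hb : ∀ j, Mw j c * zB true = Mw j c' * zB true := by
      intro j
      have := hkey j
      rw [Real.sign_of_pos hgt, Real.sign_of_pos hgt'] at this
      have hI : Mw j c = Mw j c' := by exact_mod_cast (show ((Mw j c : ℤ) : ℝ) = ((Mw j c' : ℤ) : ℝ) by push_cast; linarith)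
      simp [zB, hI] <;> ring
    obtain ⟨h1, _⟩ := Mw_key c c' true true hb
    exact ⟨h1, by rw [Real.sign_of_pos hgt, Real.sign_of_pos hgt']⟩
end

section
/- The maximum number of coins that may be present, if only three applications of the scale balance are allowed, is exactly 12: there exists a balanced weighing scheme for 12 coins using 3 weighings that identifies the counterfeit, and every n for which a balanced weighing scheme using 3 weighings identifies the counterfeit satisfies n ≤ 12 (i.e., 12 is the greatest element of the set of such n). -/
lemma row_sum_zero {k n : ℕ} {M : Fin k → Fin n → ℤ} (hS : IsScheme M) (hB : IsBalanced M)
    (j : Fin k) : ∑ i, M j i = 0 := by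
  have h : ∀ i : Fin n, M j i = (if M j i = 1 then (1:ℤ) else 0) - (if M j i = -1 then 1 else 0) := by
    intro i
    have h' := hS j i
    simp only [Set.mem_insert_iff, Set.mem_singleton_iff] at h'
    rcases h' with h | h | h <;> simp [h]
  calc ∑ i, M j i = ∑ i, ((if M j i = 1 then (1:ℤ) else 0) - (if M j i = -1 then 1 else 0)) :=
        Finset.sum_congr rfl (fun i _ => h i)
    _ = 0 := by
        rw [Finset.sum_sub_distrib, Finset.sum_boole, Finset.sum_boole, hB j, sub_self]

lemma outcome_eq {k n : ℕ} {M : Fin k → Fin n → ℤ} (hS : IsScheme M) (hB : IsBalanced M)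
    (j : Fin k) {g : ℝ} {c : Fin n} {w : Fin n → ℝ} (h : IsScenario g c w) :
    ∑ i, (M j i : ℝ) * w i = (M j c : ℝ) * (w c - g) := by
  have h0 : (∑ i, (M j i : ℝ)) = 0 := by
    have := row_sum_zero hS hB j
    exact_mod_cast congrArg (Int.cast : ℤ → ℝ) this
  calc ∑ i, (M j i : ℝ) * w i
      = ∑ i, ((M j i : ℝ) * g + if i = c then (M j c : ℝ) * (w c - g) else 0) := by
        refine Finset.sum_congr rfl (fun i _ => ?_)
        by_cases hic : i = c
        · subst hic; simp; ring
        · rw [h.1 i hic]; simp [hic]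
    _ = (∑ i, (M j i : ℝ)) * g + (M j c : ℝ) * (w c - g) := by
        rw [Finset.sum_add_distrib, Finset.sum_ite_eq' Finset.univ c, Finset.sum_mul]
        simp
    _ = (M j c : ℝ) * (w c - g) := by rw [h0]; ring

/-- the concrete 12-coin scheme -/
def M0 : Fin 3 → Fin 12 → ℤ :=
  ![![-1,-1,-1, 1, 1, 1,-1, 1, 0, 0, 0, 0],
    ![-1,-1, 0, 0, 0,-1, 1,-1, 1, 1, 1, 0],
    ![ 0, 1,-1, 0,-1, 1, 0,-1, 1, 0,-1, 1]]

lemma M0_scheme : IsScheme M0 := by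
  have h : ∀ j i, M0 j i = -1 ∨ M0 j i = 0 ∨ M0 j i = 1 := by decide
  intro j i
  rcases h j i with h' | h' | h' <;> simp [h']

lemma M0_balanced : IsBalanced M0 := by unfold IsBalanced; decide

lemma M0_cols_inj : ∀ c c' : Fin 12, (∀ j, M0 j c = M0 j c') → c = c' := by decide

lemma M0_no_anti : ∀ c c' : Fin 12, ¬ (∀ j, M0 j c = - M0 j c') := by decide

lemma sign_cast_mul (x : ℤ) (hx : x = -1 ∨ x = 0 ∨ x = 1) (d : ℝ) :
    Real.sign ((x : ℝ) * d) = (x : ℝ) * Real.sign d := by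
  rcases hx with h | h | h <;> subst h
  · push_cast; rw [neg_one_mul, neg_one_mul, Real.sign_neg]
  · simp [Real.sign_zero]
  · simp

lemma M0_identifies : Identifies M0 := by
  intro g c w g' c' w' hsc hsc' hagree
  have hd : w c - g ≠ 0 := sub_ne_zero.mpr hsc.2
  have hd' : w' c' - g' ≠ 0 := sub_ne_zero.mpr hsc'.2
  have hs := Real.sign_apply_eq_of_ne_zero _ hd
  have hs' := Real.sign_apply_eq_of_ne_zero _ hd'
  have hx : ∀ j i, M0 j i = -1 ∨ M0 j i = 0 ∨ M0 j i = 1 := by decide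
  have key : ∀ j, (M0 j c : ℝ) * Real.sign (w c - g) = (M0 j c' : ℝ) * Real.sign (w' c' - g') := by
    intro j
    have := hagree j
    rw [outcome_eq M0_scheme M0_balanced j hsc, outcome_eq M0_scheme M0_balanced j hsc',
      sign_cast_mul _ (hx j c), sign_cast_mul _ (hx j c')] at this
    exact this
  rcases hs with h1 | h1 <;> rcases hs' with h2 | h2
  all_goals rw [h1, h2] at key ⊢
  · -- -1, -1
    refine ⟨M0_cols_inj c c' (fun j => ?_), rfl⟩
    have := key j
    have : (M0 j c : ℝ) = (M0 j c') := by linarith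
    exact_mod_cast this
  · -- -1, 1
    exfalso
    refine M0_no_anti c c' (fun j => ?_)
    have := key j
    have : (M0 j c : ℝ) = -(M0 j c') := by linarith
    exact_mod_cast this
  · -- 1, -1
    exfalso
    refine M0_no_anti c c' (fun j => ?_)
    have := key j
    have : (M0 j c : ℝ) = -(M0 j c') := by linarith
    exact_mod_cast this
  · -- 1, 1
    refine ⟨M0_cols_inj c c' (fun j => ?_), rfl⟩
    have := key j
    have : (M0 j c : ℝ) = (M0 j c') := by linarith
    exact_mod_cast this

/-- integer value of a sign -/
def zval : SignType → ℤ
  | .neg => -1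
  | .zero => 0
  | .pos => 1

/-- 12 is the maximum number of coins for which a balanced weighing scheme using
3 weighings identifies the counterfeit. -/
theorem twelve_is_max_for_three_weighings :
    IsGreatest {n : ℕ | ∃ M : Fin 3 → Fin n → ℤ,
      IsScheme M ∧ IsBalanced M ∧ Identifies M} 12 := by
  constructor
  · exact ⟨M0, M0_scheme, M0_balanced, M0_identifies⟩
  · rintro n ⟨M, hS, hB, hI⟩
    by_contra hn
    push_neg at hn
    -- basic scenarios
    have hwsc : ∀ (c : Fin n) (s : ℝ), s ≠ 0 →
        IsScenario 0 c (fun i => if i = c then s else 0) := by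
      intro c s hs
      exact ⟨fun i hi => if_neg hi, by simpa using hs⟩
    have hsum : ∀ (j : Fin 3) (c : Fin n) (s : ℝ) (hs : s ≠ 0),
        ∑ i, (M j i : ℝ) * (if i = c then s else 0) = (M j c : ℝ) * s := by
      intro j c s hs
      rw [outcome_eq hS hB j (hwsc c s hs)]
      simp
    -- key consequence: no column is the negative of another (incl. itself)
    have no_anti : ∀ c c' : Fin n, ¬ (∀ j, M j c = - M j c') := by
      intro c c' hanti
      have h1 : (1:ℝ) ≠ 0 := one_ne_zero
      have hm1 : (-1:ℝ) ≠ 0 := by norm_num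
      have := hI 0 c _ 0 c' _ (hwsc c 1 h1) (hwsc c' (-1) hm1) ?_
      · have h2 := this.2
        rw [show (if c = c then (1:ℝ) else 0) = 1 from if_pos rfl,
          show (if c' = c' then (-1:ℝ) else 0) = -1 from if_pos rfl,
          show (1:ℝ) - 0 = 1 by ring, show (-1:ℝ) - 0 = -1 by ring,
          Real.sign_one, Real.sign_neg, Real.sign_one] at h2
        norm_num at h2
      · intro j
        rw [hsum j c 1 h1, hsum j c' (-1) hm1]
        have : (M j c : ℝ) = -(M j c' : ℝ) := by exact_mod_cast hanti j
        rw [this]; ring_nf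
    have cols_inj : ∀ c c' : Fin n, (∀ j, M j c = M j c') → c = c' := by
      intro c c' heq
      have h1 : (1:ℝ) ≠ 0 := one_ne_zero
      have := hI 0 c _ 0 c' _ (hwsc c 1 h1) (hwsc c' 1 h1) ?_
      · exact this.1
      · intro j
        rw [hsum j c 1 h1, hsum j c' 1 h1]
        have : (M j c : ℝ) = (M j c' : ℝ) := by exact_mod_cast heq j
        rw [this]
    -- signs
    set σ : Fin n → Fin 3 → SignType := fun c j =>
      if M j c = 1 then 1 else if M j c = -1 then -1 else 0 with hσdef
    have hσM : ∀ c j, M j c = zval (σ c j) := by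
      intro c j
      have h' := hS j c
      simp only [Set.mem_insert_iff, Set.mem_singleton_iff] at h'
      rcases h' with h | h | h <;> simp [hσdef, h, zval]
    have zval_neg : ∀ s : SignType, zval (-s) = - zval s := by decide
    have neg_inj_st : ∀ x y : SignType, -x = -y → x = y := by decide
    -- the injection
    set F : Fin n × Bool → (Fin 3 → SignType) :=
      fun p j => if p.2 then σ p.1 j else - σ p.1 j with hFdef
    have hFne : ∀ p, F p ≠ 0 := by
      rintro ⟨c, b⟩ h0
      refine no_anti c c (fun j => ?_)
      cases b
      · have h2 : -σ c j = 0 := congrFun h0 j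
        have h3 : σ c j = 0 := neg_inj_st _ _ (by rw [h2]; rfl)
        rw [hσM c j, h3]; simp [zval]
      · have h2 : σ c j = 0 := congrFun h0 j
        rw [hσM c j, h2]; simp [zval]
    have hFinj : Function.Injective F := by
      rintro ⟨c, b⟩ ⟨c', b'⟩ h
      have hj : ∀ j, F (c, b) j = F (c', b') j := fun j => congrFun h j
      cases b <;> cases b'
      · -- false false
        have heq : ∀ j, M j c = M j c' := by
          intro j
          have h2 : -σ c j = -σ c' j := hj j
          have h3 : σ c j = σ c' j := neg_inj_st _ _ h2
          rw [hσM c j, hσM c' j, h3]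
        rw [cols_inj c c' heq]
      · -- false true : -σ c = σ c'
        exfalso
        refine no_anti c' c (fun j => ?_)
        have h2 : -σ c j = σ c' j := hj j
        rw [hσM c' j, hσM c j, ← h2, zval_neg]
      · -- true false : σ c = -σ c'
        exfalso
        refine no_anti c c' (fun j => ?_)
        have h2 : σ c j = -σ c' j := hj j
        rw [hσM c j, hσM c' j, h2, zval_neg]
      · have heq : ∀ j, M j c = M j c' := by
          intro j
          have h2 : σ c j = σ c' j := hj j
          rw [hσM c j, hσM c' j, h2]
        rw [cols_inj c c' heq]
    -- cardinality bound
    set G : Fin n × Bool → {v : Fin 3 → SignType // v ≠ 0} := fun p => ⟨F p, hFne p⟩ with hGdef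
    have hGinj : Function.Injective G := by
      intro p q h
      exact hFinj (congrArg Subtype.val h)
    have hcard26 : Fintype.card {v : Fin 3 → SignType // v ≠ 0} = 26 := by decide
    have hle : 2 * n ≤ 26 := by
      have := Fintype.card_le_of_injective G hGinj
      simpa [hcard26, Fintype.card_prod, mul_comm] using this
    have hn13 : n = 13 := by omega
    subst hn13
    have hGbij : Function.Bijective G := by
      rw [Fintype.bijective_iff_injective_and_card]
      exact ⟨hGinj, by simp [hcard26]⟩
    -- count, at weighing 0
    have h9 : Fintype.card {v : {v : Fin 3 → SignType // v ≠ 0} // v.1 0 = 1} = 9 := by decide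
    have e2 : {p : Fin 13 × Bool // (G p).1 0 = 1} ≃
        {v : {v : Fin 3 → SignType // v ≠ 0} // v.1 0 = 1} :=
      Equiv.subtypeEquiv (Equiv.ofBijective G hGbij) (fun p => Iff.rfl)
    have hdom : (Finset.univ.filter (fun p : Fin 13 × Bool => (G p).1 0 = 1)).card = 9 := by
      rw [← Fintype.card_subtype, Fintype.card_congr e2, h9]
    have helper : ∀ s : SignType, (if -s = 1 then (1:ℕ) else 0) = if s = -1 then 1 else 0 := by
      decide
    have hsplit : (Finset.univ.filter (fun p : Fin 13 × Bool => (G p).1 0 = 1)).card =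
        (Finset.univ.filter (fun c : Fin 13 => σ c 0 = 1)).card +
        (Finset.univ.filter (fun c : Fin 13 => σ c 0 = -1)).card := by
      rw [Finset.card_filter, Fintype.sum_prod_type, Finset.card_filter, Finset.card_filter,
        ← Finset.sum_add_distrib]
      refine Finset.sum_congr rfl (fun c _ => ?_)
      rw [Fintype.sum_bool]
      show (if σ c 0 = 1 then (1:ℕ) else 0) + (if -σ c 0 = 1 then 1 else 0) = _
      rw [helper (σ c 0)]
    have hiff1 : ∀ c : Fin 13, σ c 0 = 1 ↔ M 0 c = 1 := by
      intro c
      have h' := hS 0 c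
      simp only [Set.mem_insert_iff, Set.mem_singleton_iff] at h'
      rcases h' with h | h | h <;> simp [hσdef, h]
    have hiff2 : ∀ c : Fin 13, σ c 0 = -1 ↔ M 0 c = -1 := by
      intro c
      have h' := hS 0 c
      simp only [Set.mem_insert_iff, Set.mem_singleton_iff] at h'
      rcases h' with h | h | h <;> simp [hσdef, h]
    have hA : (Finset.univ.filter (fun c : Fin 13 => σ c 0 = 1)).card =
        (Finset.univ.filter (fun c : Fin 13 => M 0 c = 1)).card := by
      congr 1
      exact Finset.filter_congr (fun c _ => hiff1 c)
    have hBc : (Finset.univ.filter (fun c : Fin 13 => σ c 0 = -1)).card =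
        (Finset.univ.filter (fun c : Fin 13 => M 0 c = -1)).card := by
      congr 1
      exact Finset.filter_congr (fun c _ => hiff2 c)
    have hbal := hB 0
    omega
end

section
/- For every natural number k ≥ 2, the maximum number of coins n for which a balanced weighing scheme using k weighings identifies the counterfeit is exactly (3 ^ k - 3) / 2: that is, (3 ^ k - 3) / 2 is the greatest element of the set of n admitting such a scheme. -/
/-!
In a balanced weighing the genuine weight cancels, so weighing `j` shows `M j c * sign (w c - g)`.
Hence the scheme identifies the counterfeit iff the columns of `M`, read in `(ZMod 3)^k`, are
distinct and no column is the negative of a column (so none vanishes): they pick at most one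
vector from each of the `(3^k - 1)/2` classes `±v` of nonzero vectors. They cannot pick from all of
them, since every row would then have `3^(k-1)` nonzero entries, an odd number, while a balanced
row has as many `1`s as `-1`s.

Conversely, the `3^k - 3` nonconstant vectors fall into orbits `{v, v + 1, v + 2}` under adding the
constant vector `1`, and along an orbit every coordinate takes each value of `ZMod 3` once. Taking,
from each pair of orbits `±O`, the one whose first coordinate differing from coordinate `0` exceeds
it by one gives `(3^k - 3)/2` columns whose rows sum to zero.
-/

open Finset Pointwise

namespace Weighing

lemma valMinAbs_mem (x : ZMod 3) : x.valMinAbs ∈ ({-1, 0, 1} : Set ℤ) := by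
  revert x
  decide

lemma valMinAbs_intCast_of_mem {a : ℤ} (ha : a ∈ ({-1, 0, 1} : Set ℤ)) :
    (a : ZMod 3).valMinAbs = a := by
  rcases ha with rfl | rfl | rfl <;> rfl

lemma intCast_injOn : Set.InjOn (Int.cast : ℤ → ZMod 3) {-1, 0, 1} := fun a ha b hb h => by
  rw [← valMinAbs_intCast_of_mem ha, ← valMinAbs_intCast_of_mem hb, h]

lemma valMinAbs_add_valMinAbs_add_one_add_valMinAbs_add_two (y : ZMod 3) :
    y.valMinAbs + (y + 1).valMinAbs + (y + 2).valMinAbs = 0 := by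
  revert y
  decide

lemma card_filter_apply_ne_zero {k : ℕ} (j : Fin k) :
    #{v : Fin k → ZMod 3 | v j ≠ 0} = 2 * 3 ^ (k - 1) := by
  have hzero : #{v : Fin k → ZMod 3 | v j = 0} = 3 ^ (k - 1) := by
    simpa [Fintype.piFinset_univ] using
      Fintype.card_filter_piFinset_const (univ : Finset (ZMod 3)) j 0
  have htotal := card_filter_add_card_filter_not (s := (univ : Finset (Fin k → ZMod 3)))
    fun v => v j = 0
  rw [hzero, card_univ, Fintype.card_fun, ZMod.card, Fintype.card_fin] at htotal
  have hk : 3 ^ k = 3 * 3 ^ (k - 1) := by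
    rw [← pow_succ']
    congr
    have := j.2
    omega
  simp only [ne_eq]
  omega

section Antipodal

variable {G : Type*} [AddGroup G] [DecidableEq G] {S : Finset G}

lemma card_union_neg (h : Disjoint S (-S)) : #(S ∪ -S) = 2 * #S := by
  rw [card_union_of_disjoint h, card_neg, two_mul]

lemma union_neg_subset_erase_zero [Fintype G] (h : Disjoint S (-S)) :
    S ∪ -S ⊆ univ.erase 0 := by
  have h0 : (0 : G) ∉ S := fun h0 => disjoint_left.1 h h0 (by simpa [mem_neg] using h0)
  intro u hu
  refine mem_erase.2 ⟨?_, mem_univ u⟩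
  rintro rfl
  rcases mem_union.1 hu with hu | hu
  · exact h0 hu
  · exact h0 (by simpa [mem_neg] using hu)

lemma two_mul_card_add_one_le [Fintype G] (h : Disjoint S (-S)) :
    2 * #S + 1 ≤ Fintype.card G := by
  have := card_le_card (union_neg_subset_erase_zero h)
  rw [card_union_neg h, card_erase_of_mem (mem_univ 0), card_univ] at this
  have : 0 < Fintype.card G := Fintype.card_pos
  omega

lemma union_neg_eq_erase_zero [Fintype G] (h : Disjoint S (-S))
    (hcard : 2 * #S + 1 = Fintype.card G) : S ∪ -S = univ.erase 0 := by
  refine eq_of_subset_of_card_le (union_neg_subset_erase_zero h) ?_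
  rw [card_union_neg h, card_erase_of_mem (mem_univ 0), card_univ]
  omega

lemma two_mul_card_filter (h : Disjoint S (-S)) (p : G → Prop) [DecidablePred p]
    (hp : ∀ u, p (-u) ↔ p u) : 2 * #(S.filter p) = #((S ∪ -S).filter p) := by
  have hneg : (-S).filter p = -S.filter p := by
    ext u
    simp [hp]
  rw [filter_union, hneg, card_union_neg (hneg ▸ disjoint_filter_filter h)]

end Antipodal

section Scheme

variable {k n : ℕ} {M : Fin k → Fin n → ℤ}

lemma IsScheme.entry_cases (hS : IsScheme M) (j : Fin k) (i : Fin n) :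
    M j i = -1 ∨ M j i = 0 ∨ M j i = 1 :=
  hS j i

lemma sum_eq_card_sub_card {ι : Type*} [Fintype ι] {r : ι → ℤ}
    (hr : ∀ i, r i = -1 ∨ r i = 0 ∨ r i = 1) :
    ∑ i, r i = (#{i | r i = 1} : ℤ) - #{i | r i = -1} := by
  have hsplit : ∀ i, r i = (if r i = 1 then 1 else 0) - (if r i = -1 then 1 else 0) := by
    intro i
    rcases hr i with h | h | h <;> simp [h]
  rw [sum_congr rfl fun i _ => hsplit i, sum_sub_distrib, sum_boole, sum_boole]

lemma isBalanced_iff_sum_eq_zero (hS : IsScheme M) :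
    IsBalanced M ↔ ∀ j, ∑ i, M j i = 0 := by
  simp only [IsBalanced, sum_eq_card_sub_card (IsScheme.entry_cases hS _), sub_eq_zero,
    Nat.cast_inj]

lemma even_card_ne_zero_of_isBalanced (hS : IsScheme M) (hB : IsBalanced M) (j : Fin k) :
    Even #{i | M j i ≠ 0} := by
  have hsplit : #{i | M j i ≠ 0} = #{i | M j i = 1} + #{i | M j i = -1} := by
    rw [← card_union_of_disjoint (disjoint_filter.2 fun i _ h => by omega), ← filter_or]
    congr 1
    ext i
    rcases IsScheme.entry_cases hS j i with h | h | h <;> simp [h]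
  rw [hsplit, hB j]
  exact ⟨_, rfl⟩

def column (M : Fin k → Fin n → ℤ) (c : Fin n) : Fin k → ZMod 3 := fun j => M j c

lemma column_eq_iff (hS : IsScheme M) {c c' : Fin n} :
    column M c = column M c' ↔ ∀ j, M j c = M j c' := by
  simp only [funext_iff, column]
  exact forall_congr' fun j => intCast_injOn.eq_iff (hS j c) (hS j c')

lemma column_eq_neg_iff (hS : IsScheme M) {c c' : Fin n} :
    column M c = -column M c' ↔ ∀ j, M j c = -M j c' := by
  simp only [funext_iff, column, Pi.neg_apply, ← Int.cast_neg]
  refine forall_congr' fun j => intCast_injOn.eq_iff (hS j c) ?_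
  rcases IsScheme.entry_cases hS j c' with h | h | h <;> simp [h]

lemma column_apply_eq_zero_iff (hS : IsScheme M) {c : Fin n} {j : Fin k} :
    column M c j = 0 ↔ M j c = 0 := by
  rw [column, ← Int.cast_zero]
  exact intCast_injOn.eq_iff (hS j c) (by simp)

lemma isScenario_single (c : Fin n) {s : ℝ} (hs : s ≠ 0) : IsScenario 0 c (Pi.single c s) :=
  ⟨fun i hi => Pi.single_eq_of_ne hi _, by simpa using hs⟩

lemma sum_mul_eq_of_isScenario (hS : IsScheme M) (hB : IsBalanced M) {g : ℝ} {c : Fin n}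
    {w : Fin n → ℝ} (hw : IsScenario g c w) (j : Fin k) :
    ∑ i, (M j i : ℝ) * w i = M j c * (w c - g) := by
  have hrow : ∑ i, (M j i : ℝ) = 0 := by exact_mod_cast (isBalanced_iff_sum_eq_zero hS).1 hB j
  calc ∑ i, (M j i : ℝ) * w i = ∑ i, (M j i : ℝ) * (w i - g) + (∑ i, (M j i : ℝ)) * g := by
        rw [sum_mul, ← sum_add_distrib]
        simp only [mul_sub, sub_add_cancel]
    _ = M j c * (w c - g) := by
        rw [hrow, zero_mul, add_zero]
        exact sum_eq_single c (fun i _ hi => by rw [hw.1 i hi, sub_self, mul_zero]) (by simp)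

lemma sign_sum_mul_eq_of_isScenario (hS : IsScheme M) (hB : IsBalanced M) {g : ℝ} {c : Fin n}
    {w : Fin n → ℝ} (hw : IsScenario g c w) (j : Fin k) :
    Real.sign (∑ i, (M j i : ℝ) * w i) = M j c * Real.sign (w c - g) := by
  rw [sum_mul_eq_of_isScenario hS hB hw j]
  rcases IsScheme.entry_cases hS j c with h | h | h <;>
    simp only [h, Int.cast_neg, Int.cast_zero, Int.cast_one, neg_one_mul, zero_mul, one_mul,
      Real.sign_neg, Real.sign_zero]

theorem identifies_iff (hS : IsScheme M) (hB : IsBalanced M) :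
    Identifies M ↔ Function.Injective (column M) ∧ ∀ c c', column M c ≠ -column M c' := by
  constructor
  · intro hI
    have hsingle : ∀ c c' (s s' : ℝ), s ≠ 0 → s' ≠ 0 →
        (∀ j, (M j c : ℝ) * Real.sign s = M j c' * Real.sign s') →
        c = c' ∧ Real.sign s = Real.sign s' := by
      intro c c' s s' hs hs' h
      have hw := isScenario_single c hs
      have hw' := isScenario_single c' hs'
      simpa using hI 0 c _ 0 c' _ hw hw' fun j => by
        rw [sign_sum_mul_eq_of_isScenario hS hB hw, sign_sum_mul_eq_of_isScenario hS hB hw']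
        simpa using h j
    refine ⟨fun c c' h => ?_, fun c c' h => ?_⟩
    · refine (hsingle c c' 1 1 one_ne_zero one_ne_zero fun j => ?_).1
      rw [(column_eq_iff hS).1 h j]
    · have := (hsingle c c' 1 (-1) one_ne_zero (by norm_num) fun j => ?_).2
      · norm_num [Real.sign_neg] at this
      · rw [(column_eq_neg_iff hS).1 h j, Real.sign_neg]
        push_cast
        ring
  · rintro ⟨hinj, hneg⟩ g c w g' c' w' hw hw' hout
    set s := Real.sign (w c - g)
    have hout' : ∀ j, (M j c : ℝ) * s = M j c' * Real.sign (w' c' - g') := fun j => by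
      rw [← sign_sum_mul_eq_of_isScenario hS hB hw, ← sign_sum_mul_eq_of_isScenario hS hB hw']
      exact hout j
    have hs : s ≠ 0 := Real.sign_eq_zero_iff.not.2 (sub_ne_zero.2 hw.2)
    have hs' : Real.sign (w' c' - g') = s ∨ Real.sign (w' c' - g') = -s := by
      rcases Real.sign_apply_eq_of_ne_zero _ (sub_ne_zero.2 hw.2) with h | h <;>
      rcases Real.sign_apply_eq_of_ne_zero _ (sub_ne_zero.2 hw'.2) with h' | h' <;>
      simp only [s, h, h'] <;> norm_num
    rcases hs' with h | h
    · refine ⟨hinj ((column_eq_iff hS).2 fun j => ?_), h.symm⟩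
      have := hout' j
      rw [h] at this
      exact_mod_cast mul_right_cancel₀ hs this
    · refine absurd ((column_eq_neg_iff hS).2 fun j => ?_) (hneg c c')
      have := hout' j
      rw [h, mul_neg, ← neg_mul] at this
      exact_mod_cast mul_right_cancel₀ hs this

theorem two_mul_add_three_le_of_identifies (hk : 0 < k) (hS : IsScheme M) (hB : IsBalanced M)
    (hI : Identifies M) : 2 * n + 3 ≤ 3 ^ k := by
  obtain ⟨hinj, hneg⟩ := (identifies_iff hS hB).1 hI
  set S := univ.image (column M)
  have hcard : #S = n := by rw [card_image_of_injective _ hinj, card_univ, Fintype.card_fin]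
  have hdisj : Disjoint S (-S) := by
    refine disjoint_left.2 fun u hu hu' => ?_
    obtain ⟨c, -, rfl⟩ := mem_image.1 hu
    obtain ⟨_, hu'', hc⟩ := mem_neg.1 hu'
    obtain ⟨c', -, rfl⟩ := mem_image.1 hu''
    exact hneg c c' hc.symm
  have hcardG : Fintype.card (Fin k → ZMod 3) = 3 ^ k := by simp
  have hle := two_mul_card_add_one_le hdisj
  obtain ⟨m, hm⟩ : Odd (3 ^ k) := Odd.pow (by decide)
  suffices 2 * n + 1 ≠ 3 ^ k by omega
  intro heq
  have hcover := union_neg_eq_erase_zero hdisj (by rw [hcard, hcardG, heq])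
  let j : Fin k := ⟨0, hk⟩
  have hhalf := two_mul_card_filter hdisj (fun u => u j ≠ 0) (by simp)
  rw [hcover, filter_erase, erase_eq_of_notMem (by simp), card_filter_apply_ne_zero] at hhalf
  have hrow : #{c | M j c ≠ 0} = #(S.filter fun u => u j ≠ 0) := by
    rw [filter_image, card_image_of_injective _ hinj]
    simp only [ne_eq, column_apply_eq_zero_iff hS]
  have heven := even_card_ne_zero_of_isBalanced hS hB j
  rw [hrow, show #(S.filter fun u => u j ≠ 0) = 3 ^ (k - 1) by omega] at heven
  exact Nat.not_even_iff_odd.2 (Odd.pow (by decide)) heven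

theorem exists_scheme_of_disjoint_neg (T : Finset (Fin k → ZMod 3)) (hT : Disjoint T (-T))
    (hsum : ∀ j, ∑ v ∈ T, (v j).valMinAbs = 0) :
    ∃ M : Fin k → Fin #T → ℤ, IsScheme M ∧ IsBalanced M ∧ Identifies M := by
  let e := T.equivFin.symm
  let M : Fin k → Fin #T → ℤ := fun j c => ((e c : Fin k → ZMod 3) j).valMinAbs
  have hS : IsScheme M := fun j c => valMinAbs_mem _
  have hcol : ∀ c, column M c = e c := fun c => funext fun j => ZMod.coe_valMinAbs _
  have hB : IsBalanced M := (isBalanced_iff_sum_eq_zero hS).2 fun j => by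
    rw [← hsum j, ← sum_coe_sort T]
    exact e.sum_comp fun v => (v.1 j).valMinAbs
  refine ⟨M, hS, hB, (identifies_iff hS hB).2 ⟨fun c c' h => ?_, fun c c' h => ?_⟩⟩
  · rw [hcol, hcol] at h
    exact e.injective (Subtype.ext h)
  · rw [hcol, hcol] at h
    exact disjoint_left.1 hT (e c).2 (mem_neg'.2 (by rw [h, neg_neg]; exact (e c').2))

end Scheme

section Construction

variable {k : ℕ} [NeZero k]

def FirstChangeIsUp (v : Fin k → ZMod 3) : Prop :=
  ∃ i, v i = v 0 + 1 ∧ ∀ l < i, v l = v 0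

instance : DecidablePred (FirstChangeIsUp (k := k)) := fun _ => by
  unfold FirstChangeIsUp
  infer_instance

lemma firstChangeIsUp_add_const (v : Fin k → ZMod 3) (a : ZMod 3) :
    FirstChangeIsUp (v + Function.const _ a) ↔ FirstChangeIsUp v := by
  simp only [FirstChangeIsUp, Pi.add_apply, Function.const_apply, add_right_comm _ a 1,
    add_left_inj]

lemma not_firstChangeIsUp_const (a : ZMod 3) : ¬FirstChangeIsUp (Function.const (Fin k) a) := by
  rintro ⟨i, hi, -⟩
  have : (1 : ZMod 3) = 0 := by simpa using hi.symm
  exact absurd this (by decide)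

lemma not_firstChangeIsUp_neg {v : Fin k → ZMod 3} (h : FirstChangeIsUp v) :
    ¬FirstChangeIsUp (-v) := by
  obtain ⟨i, hi, hlt⟩ := h
  rintro ⟨i', hi', hlt'⟩
  simp only [Pi.neg_apply, neg_inj] at hi' hlt'
  rcases lt_trichotomy i i' with h | rfl | h
  · have : (1 : ZMod 3) = 0 := by linear_combination hlt' i h - hi
    exact absurd this (by decide)
  · have : (2 : ZMod 3) = 0 := by linear_combination -hi - hi'
    exact absurd this (by decide)
  · have : (1 : ZMod 3) = 0 := by linear_combination -hi' - hlt i' h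
    exact absurd this (by decide)

lemma firstChangeIsUp_or_neg {v : Fin k → ZMod 3} (h : ∃ i, v i ≠ v 0) :
    FirstChangeIsUp v ∨ FirstChangeIsUp (-v) := by
  obtain ⟨i, hi, hmin⟩ := wellFounded_lt.has_min {i | v i ≠ v 0} h
  have hlt : ∀ l < i, v l = v 0 := fun l hl => not_not.1 fun hne => hmin l hne hl
  have htrit : ∀ x : ZMod 3, x ≠ 0 → x = 1 ∨ x = -1 := by decide
  rcases htrit _ (sub_ne_zero.2 hi) with h | h
  · exact Or.inl ⟨i, by linear_combination h, hlt⟩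
  · refine Or.inr ⟨i, ?_, fun l hl => by simp [hlt l hl]⟩
    simp only [Pi.neg_apply]
    linear_combination -h

variable (k) in
def upVectors : Finset (Fin k → ZMod 3) := {v | FirstChangeIsUp v}

lemma disjoint_upVectors_neg : Disjoint (upVectors k) (-upVectors k) :=
  disjoint_left.2 fun _ hv hv' =>
    not_firstChangeIsUp_neg (mem_filter.1 hv).2 (mem_filter.1 (mem_neg'.1 hv')).2

lemma upVectors_union_neg :
    upVectors k ∪ -upVectors k = (univ.image (Function.const (Fin k)))ᶜ := by
  ext v
  simp only [upVectors, mem_union, mem_neg', mem_filter, mem_univ, true_and, mem_compl,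
    mem_image, not_exists]
  constructor
  · rintro h a rfl
    rcases h with h | h
    · exact not_firstChangeIsUp_const a h
    · exact not_firstChangeIsUp_const (-a) h
  · intro h
    refine firstChangeIsUp_or_neg (not_forall.1 fun hconst => h (v 0) ?_)
    exact funext fun i => (hconst i).symm

variable (k) in
lemma two_mul_card_upVectors_add_three : 2 * #(upVectors k) + 3 = 3 ^ k := by
  have h := card_union_neg (disjoint_upVectors_neg (k := k))
  rw [upVectors_union_neg, card_compl, card_image_of_injective _ Function.const_injective] at h
  simp only [card_univ, Fintype.card_fun, ZMod.card, Fintype.card_fin] at h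
  have : 3 ≤ 3 ^ k := Nat.le_self_pow (NeZero.ne _) 3
  omega

lemma sum_valMinAbs_upVectors (j : Fin k) : ∑ v ∈ upVectors k, (v j).valMinAbs = 0 := by
  have hshift : ∀ a : ZMod 3,
      ∑ v ∈ upVectors k, (v j + a).valMinAbs = ∑ v ∈ upVectors k, (v j).valMinAbs := fun a =>
    sum_equiv (Equiv.addRight (Function.const _ a))
      (by simp [upVectors, firstChangeIsUp_add_const]) (by simp)
  have h := sum_eq_zero (s := upVectors k) fun v _ =>
    valMinAbs_add_valMinAbs_add_one_add_valMinAbs_add_two (v j)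
  rw [sum_add_distrib, sum_add_distrib, hshift, hshift] at h
  omega

end Construction

end Weighing

open Weighing

/-- For every k ≥ 2, the maximum number of coins for which a balanced weighing
scheme using k weighings identifies the counterfeit is exactly (3 ^ k - 3) / 2. -/
theorem max_coins_eq (k : ℕ) (hk : 2 ≤ k) :
    IsGreatest {n : ℕ | ∃ M : Fin k → Fin n → ℤ,
      IsScheme M ∧ IsBalanced M ∧ Identifies M} ((3 ^ k - 3) / 2) := by
  have : NeZero k := ⟨by omega⟩
  have hcard := two_mul_card_upVectors_add_three k
  refine ⟨?_, fun n ⟨M, hS, hB, hI⟩ => ?_⟩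
  · rw [show (3 ^ k - 3) / 2 = #(upVectors k) by omega]
    exact exists_scheme_of_disjoint_neg _ disjoint_upVectors_neg sum_valMinAbs_upVectors
  · have := two_mul_add_three_le_of_identifies (by omega) hS hB hI
    omega
end

section
/- For every natural number k ≥ 2, there exists a balanced weighing scheme for (3 ^ k - 3) / 2 coins using k weighings that identifies the counterfeit. -/
/-! Label the coins by vectors of `(ZMod 3)ᵏ`, read as columns with entries `-1, 0, 1`. Take the
vectors `a • 1 + (0, d)` where the first nonzero entry of `d` is `1`: there are `(3ᵏ - 3) / 2`
of them, no two are equal or opposite, and adding `1` permutes them. In each weighing that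
permutation moves the coins of the right pan onto the left pan, so every row is balanced and sums
to zero. The outcome of a scenario is then `sign (w c - g)` times column `c`, which determines `c`
and the sign because the columns are distinct up to sign. -/

open Finset

theorem Real.sign_intCast_mul {m : ℤ} (hm : m ∈ ({-1, 0, 1} : Set ℤ)) (x : ℝ) :
    Real.sign (m * x) = m * Real.sign x := by
  rcases hm with rfl | rfl | rfl
  · simp [Real.sign_neg]
  · simp [Real.sign_zero]
  · simp

namespace CoinWeighing

section Identification

variable {k n : ℕ} {M : Fin k → Fin n → ℤ}

theorem sum_eq_zero_of_isBalanced (hM : IsScheme M) (hB : IsBalanced M) (j : Fin k) :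
    ∑ i, M j i = 0 :=
  calc ∑ i, M j i = ∑ i, ((if M j i = 1 then 1 else 0) - (if M j i = -1 then 1 else 0) : ℤ) :=
        sum_congr rfl fun i _ => by
          obtain h | h | h : M j i = -1 ∨ M j i = 0 ∨ M j i = 1 := hM j i <;> simp [h]
    _ = #{i | M j i = 1} - #{i | M j i = -1} := by rw [sum_sub_distrib, sum_boole, sum_boole]
    _ = 0 := by rw [hB j, sub_self]

theorem sum_mul_eq_of_isScenario {a : Fin n → ℝ} (ha : ∑ i, a i = 0) {g : ℝ} {c : Fin n}
    {w : Fin n → ℝ} (hs : IsScenario g c w) : ∑ i, a i * w i = a c * (w c - g) :=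
  calc ∑ i, a i * w i = ∑ i, a i * (w i - g) + (∑ i, a i) * g := by
        rw [sum_mul, ← sum_add_distrib]; exact sum_congr rfl fun i _ => by ring
    _ = a c * (w c - g) := by
        rw [ha, zero_mul, add_zero]
        exact sum_eq_single c (fun i _ hi => by rw [hs.1 i hi, sub_self, mul_zero]) (by simp)

theorem identifies_of_columns (hM : IsScheme M) (hB : IsBalanced M)
    (hinj : ∀ c c', (∀ j, M j c = M j c') → c = c')
    (hanti : ∀ c c', ¬ ∀ j, M j c = -M j c') : Identifies M := by
  intro g c w g' c' w' hs hs' hout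
  have hrow (j : Fin k) : ∑ i, (M j i : ℝ) = 0 := by
    exact_mod_cast sum_eq_zero_of_isBalanced hM hB j
  have houtcol : ∀ j, (M j c : ℝ) * Real.sign (w c - g) = M j c' * Real.sign (w' c' - g') := by
    intro j
    have := hout j
    rwa [sum_mul_eq_of_isScenario (hrow j) hs, sum_mul_eq_of_isScenario (hrow j) hs',
      Real.sign_intCast_mul (hM j c), Real.sign_intCast_mul (hM j c')] at this
  rcases Real.sign_apply_eq_of_ne_zero _ (sub_ne_zero.2 hs.2) with h | h <;>
    rcases Real.sign_apply_eq_of_ne_zero _ (sub_ne_zero.2 hs'.2) with h' | h' <;>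
    simp only [h, h', mul_one, mul_neg, neg_eq_iff_eq_neg, neg_neg] at houtcol ⊢
  · exact ⟨hinj c c' fun j => by exact_mod_cast houtcol j, trivial⟩
  · exact (hanti c c' fun j => by exact_mod_cast houtcol j).elim
  · exact (hanti c c' fun j => by exact_mod_cast houtcol j).elim
  · exact ⟨hinj c c' fun j => by exact_mod_cast houtcol j, trivial⟩

end Identification

section LeadingEntry

variable {R : Type*} [AddGroup R] [DecidableEq R]

def leadingEntry : ∀ {m : ℕ}, (Fin m → R) → R
  | 0, _ => 0
  | _ + 1, d => if d 0 = 0 then leadingEntry (Fin.tail d) else d 0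

theorem leadingEntry_eq_zero_iff : ∀ {m : ℕ} {d : Fin m → R}, leadingEntry d = 0 ↔ d = 0
  | 0, d => by simp [leadingEntry, Subsingleton.elim d 0]
  | m + 1, d => by
    rw [leadingEntry]
    split_ifs with h
    · rw [leadingEntry_eq_zero_iff]
      refine ⟨fun ht => funext fun i => Fin.cases h (congrFun ht) i, ?_⟩
      rintro rfl
      rfl
    · exact ⟨fun h0 => (h h0).elim, fun hd => (h (by simp [hd])).elim⟩

theorem leadingEntry_neg : ∀ {m : ℕ} (d : Fin m → R), leadingEntry (-d) = -leadingEntry d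
  | 0, d => by simp [leadingEntry]
  | m + 1, d => by
    simp only [leadingEntry, Pi.neg_apply, neg_eq_zero]
    split_ifs
    · exact leadingEntry_neg (Fin.tail d)
    · rfl

end LeadingEntry

theorem card_leadingEntry_eq_one (m : ℕ) :
    2 * #{d : Fin m → ZMod 3 | leadingEntry d = 1} + 1 = 3 ^ m := by
  have hneg : #{d : Fin m → ZMod 3 | leadingEntry d = -1} =
      #{d : Fin m → ZMod 3 | leadingEntry d = 1} :=
    card_equiv (Equiv.neg _) fun d => by simp [leadingEntry_neg, neg_eq_iff_eq_neg]
  have hzero : #{d : Fin m → ZMod 3 | leadingEntry d = 0} = 1 := by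
    simp [leadingEntry_eq_zero_iff, filter_eq']
  have hfib := card_eq_sum_card_fiberwise (s := univ) (t := (univ : Finset (ZMod 3)))
    (f := leadingEntry (m := m)) (by simp)
  rw [show (univ : Finset (ZMod 3)) = {0, 1, -1} by decide, sum_insert (by decide),
    sum_insert (by decide), sum_singleton, card_univ, Fintype.card_fun, ZMod.card, Fintype.card_fin,
    hneg, hzero] at hfib
  omega

section TernaryScheme

variable {k n : ℕ} {v : Fin n → Fin k → ZMod 3}

def ternaryScheme (v : Fin n → Fin k → ZMod 3) : Fin k → Fin n → ℤ :=
  fun j i => (v i j).valMinAbs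

theorem isScheme_ternaryScheme (v : Fin n → Fin k → ZMod 3) : IsScheme (ternaryScheme v) := by
  intro j i
  unfold ternaryScheme
  generalize v i j = x
  revert x
  decide

theorem isBalanced_ternaryScheme (τ : Equiv.Perm (Fin n)) (hτ : ∀ i, v (τ i) = v i + 1) :
    IsBalanced (ternaryScheme v) := by
  intro j
  refine card_equiv τ fun i => ?_
  simp only [mem_filter, mem_univ, true_and]
  simp only [ternaryScheme, hτ, Pi.add_apply, Pi.one_apply]
  generalize v i j = x
  revert x
  decide

theorem identifies_ternaryScheme (hv : Function.Injective v) (hneg : ∀ i i', v i ≠ -v i')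
    (hB : IsBalanced (ternaryScheme v)) : Identifies (ternaryScheme v) := by
  have valMinAbs_neg : ∀ x : ZMod 3, (-x).valMinAbs = -x.valMinAbs := by decide
  refine identifies_of_columns (isScheme_ternaryScheme v) hB
    (fun c c' h => hv (funext fun j => ZMod.valMinAbs_inj.1 (h j)))
    (fun c c' h => hneg c c' (funext fun j => ZMod.valMinAbs_inj.1 ?_))
  rw [Pi.neg_apply, valMinAbs_neg]
  exact h j

end TernaryScheme

section TernaryCode

variable {m : ℕ}

abbrev TernaryCode (m : ℕ) := ZMod 3 × {d : Fin m → ZMod 3 // leadingEntry d = 1}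

def codeVec (x : TernaryCode m) : Fin (m + 1) → ZMod 3 :=
  fun j => x.1 + Matrix.vecCons 0 x.2.1 j

def codeShift : Equiv.Perm (TernaryCode m) :=
  (Equiv.addRight 1).prodCongr (Equiv.refl _)

theorem card_ternaryCode (m : ℕ) : Fintype.card (TernaryCode m) = (3 ^ (m + 1) - 3) / 2 := by
  have h := card_leadingEntry_eq_one m
  rw [Fintype.card_prod, ZMod.card, Fintype.card_subtype, pow_succ]
  omega

theorem codeVec_injective : Function.Injective (codeVec (m := m)) := by
  rintro ⟨a, d, hd⟩ ⟨a', d', hd'⟩ h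
  obtain rfl : a = a' := by simpa [codeVec] using congrFun h 0
  obtain rfl : d = d' := funext fun j => by simpa [codeVec] using congrFun h j.succ
  rfl

theorem codeVec_ne_neg (x y : TernaryCode m) : codeVec x ≠ -codeVec y := by
  obtain ⟨a, d, hd⟩ := x
  obtain ⟨a', d', hd'⟩ := y
  intro h
  have ha : a = -a' := by simpa [codeVec] using congrFun h 0
  have hdd : d = -d' := funext fun j => by
    have := congrFun h j.succ
    simp only [codeVec, Matrix.cons_val_succ, Pi.neg_apply, ha] at this
    simp only [Pi.neg_apply]
    linear_combination this
  rw [hdd, leadingEntry_neg, hd'] at hd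
  exact absurd hd (by decide)

theorem codeVec_codeShift (x : TernaryCode m) : codeVec (codeShift x) = codeVec x + 1 := by
  funext j
  simp only [codeVec, codeShift, Equiv.prodCongr_apply, Prod.map, Equiv.coe_addRight,
    Equiv.refl_apply, Pi.add_apply, Pi.one_apply]
  ring

end TernaryCode

end CoinWeighing

open CoinWeighing in
theorem exists_scheme_general (k : ℕ) :
    ∃ M : Fin k → Fin ((3 ^ k - 3) / 2) → ℤ,
      IsScheme M ∧ IsBalanced M ∧ Identifies M := by
  cases k with
  -- `3 ^ 0 - 3` truncates to `0`: there are no coins.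
  | zero => exact ⟨0, fun j => j.elim0, fun j => j.elim0, fun _ c => c.elim0⟩
  | succ m =>
    let e := (Fintype.equivFinOfCardEq (card_ternaryCode m)).symm
    have hB := isBalanced_ternaryScheme (v := codeVec ∘ e) (e.symm.permCongr codeShift)
      fun i => by simp [Equiv.permCongr_apply, codeVec_codeShift]
    exact ⟨_, isScheme_ternaryScheme _, hB,
      identifies_ternaryScheme (codeVec_injective.comp e.injective)
        (fun i i' => codeVec_ne_neg _ _) hB⟩

/-- For every k ≥ 2, there is a balanced weighing scheme for (3 ^ k - 3) / 2
coins using k weighings that identifies the counterfeit. -/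
theorem exists_scheme (k : ℕ) (hk : 2 ≤ k) :
    ∃ M : Fin k → Fin ((3 ^ k - 3) / 2) → ℤ,
      IsScheme M ∧ IsBalanced M ∧ Identifies M :=
  exists_scheme_general k
end

section
/- For every natural number k ≥ 1 and every n, if there exists a balanced weighing scheme for n coins using k weighings that identifies the counterfeit, then n ≤ (3 ^ k - 3) / 2. -/
/-!
Read off the columns of the scheme as vectors in `{-1, 0, 1}^k`. Comparing the single-coin
scenarios in which coin `c` is heavy or light shows that the columns are pairwise distinct and
that no column is the negative of another one (or of itself, so none is zero). Hence the columns
and their negatives are `2n` distinct nonzero sign vectors. Fix a weighing `j` and count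
separately the columns with entry zero in row `j` (they and their negatives lie among the
`3^(k-1) - 1` nonzero vectors with zero `j`-th entry) and the others (among the `2 * 3^(k-1)`
vectors with nonzero `j`-th entry). Balancedness makes the number of the latter even, while
`3^(k-1)` is odd, so `2n ≤ (3^(k-1) - 1) + (2 * 3^(k-1) - 2) = 3^k - 3`.
-/

open Finset

theorem two_mul_card_le_of_antipodal {ι α : Type*} [DecidableEq α] [InvolutiveNeg α]
    {s : Finset ι} {t : Finset α} {f : ι → α} (hf : Set.InjOn f s)
    (hmaps : ∀ i ∈ s, f i ∈ t) (ht : ∀ x ∈ t, -x ∈ t)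
    (hanti : ∀ i ∈ s, ∀ i' ∈ s, f i ≠ -f i') : 2 * #s ≤ #t := by
  have hdisj : Disjoint (s.image f) (s.image (-f)) := by
    simp only [disjoint_left, mem_image, Pi.neg_apply]
    rintro _ ⟨i, hi, rfl⟩ ⟨i', hi', hii'⟩
    exact hanti i hi i' hi' hii'.symm
  have hsub : s.image f ∪ s.image (-f) ⊆ t := by
    simp only [union_subset_iff, image_subset_iff, Pi.neg_apply]
    exact ⟨hmaps, fun i hi => ht _ (hmaps i hi)⟩
  calc 2 * #s = #(s.image f) + #(s.image (-f)) := by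
        rw [card_image_of_injOn hf, card_image_of_injOn (f := -f) (neg_injective.comp_injOn hf)]
        ring
    _ = #(s.image f ∪ s.image (-f)) := (card_union_of_disjoint hdisj).symm
    _ ≤ #t := card_le_card hsub

def signVectors (k : ℕ) : Finset (Fin k → ℤ) :=
  Fintype.piFinset fun _ => {-1, 0, 1}

theorem neg_mem_signVectors {k : ℕ} {v : Fin k → ℤ} (hv : v ∈ signVectors k) :
    -v ∈ signVectors k := by
  simp only [signVectors, Fintype.mem_piFinset, mem_insert, mem_singleton] at hv ⊢
  intro j
  rcases hv j with h | h | h <;> simp [h]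

theorem card_signVectors (k : ℕ) : #(signVectors k) = 3 ^ k := by
  simp [signVectors, Fintype.card_piFinset]

theorem card_signVectors_filter_eq_zero {k : ℕ} (j : Fin k) :
    #{v ∈ signVectors k | v j = 0} = 3 ^ (k - 1) :=
  (Fintype.card_filter_piFinset_const_eq_of_mem _ j (by simp)).trans (by simp)

section Weighing

variable {k n : ℕ} {M : Fin k → Fin n → ℤ}

theorem IsScheme.swap_mem_signVectors (hS : IsScheme M) (i : Fin n) :
    Function.swap M i ∈ signVectors k := by
  simpa [signVectors, Fintype.mem_piFinset] using fun j => hS j i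

theorem IsBalanced.even_card_ne_zero (hS : IsScheme M) (hB : IsBalanced M) (j : Fin k) :
    Even #{i | M j i ≠ 0} := by
  have hsplit : univ.filter (M j · ≠ 0) = univ.filter (M j · = 1) ∪ univ.filter (M j · = -1) := by
    ext i
    have := hS j i
    simp only [Set.mem_insert_iff, Set.mem_singleton_iff] at this
    rcases this with h | h | h <;> simp [h]
  have hdisj : Disjoint (univ.filter (M j · = 1)) (univ.filter (M j · = -1)) := by
    simp only [disjoint_left, mem_filter, mem_univ, true_and]
    omega
  rw [hsplit, card_union_of_disjoint hdisj, hB j]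
  exact ⟨_, rfl⟩

/-- `Identifies` applied to single-coin scenarios with genuine weight `0`, where the outcome of
weighing `j` is the sign of `M j c * ε`. -/
theorem Identifies.eq_and_sign_eq (hI : Identifies M) {c c' : Fin n} {ε ε' : ℝ}
    (hε : ε ≠ 0) (hε' : ε' ≠ 0)
    (h : ∀ j, Real.sign (M j c * ε) = Real.sign (M j c' * ε')) :
    c = c' ∧ Real.sign ε = Real.sign ε' := by
  have hscen : ∀ (b : Fin n) (δ : ℝ), δ ≠ 0 → IsScenario 0 b (Pi.single b δ) :=
    fun b δ hδ => ⟨fun i hi => Pi.single_eq_of_ne hi _, by simpa using hδ⟩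
  have hout : ∀ (b : Fin n) (δ : ℝ) (j : Fin k),
      ∑ i, (M j i : ℝ) * (Pi.single b δ : Fin n → ℝ) i = M j b * δ := by
    intro b δ j
    simp [Pi.single_apply]
  simpa using hI 0 c _ 0 c' _ (hscen c ε hε) (hscen c' ε' hε') (by simpa only [hout] using h)

theorem Identifies.injective_swap (hI : Identifies M) : Function.Injective (Function.swap M) :=
  fun c c' hcc' => (hI.eq_and_sign_eq one_ne_zero one_ne_zero fun j => by
    rw [show M j c = M j c' from congrFun hcc' j]).1

theorem Identifies.swap_ne_neg_swap (hI : Identifies M) (c c' : Fin n) :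
    Function.swap M c ≠ -Function.swap M c' := by
  intro hcc'
  have := (hI.eq_and_sign_eq (c := c) (c' := c') one_ne_zero (neg_ne_zero.mpr one_ne_zero)
    fun j => by rw [show M j c = -M j c' from congrFun hcc' j, Int.cast_neg, mul_neg, neg_mul]).2
  norm_num [Real.sign_neg] at this

theorem Identifies.two_mul_card_filter_le (hS : IsScheme M) (hI : Identifies M)
    (p : (Fin k → ℤ) → Prop) [DecidablePred p] (hp : ∀ v, p (-v) ↔ p v) :
    2 * #{i | p (Function.swap M i)} ≤ #{v ∈ (signVectors k).erase 0 | p v} := by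
  refine two_mul_card_le_of_antipodal hI.injective_swap.injOn ?_ ?_ ?_
  · intro i hi
    have hne : Function.swap M i ≠ 0 := fun h0 => hI.swap_ne_neg_swap i i (by simp [h0])
    simp_all [hS.swap_mem_signVectors i]
  · intro v hv
    simp_all [neg_mem_signVectors]
  · exact fun i _ i' _ => hI.swap_ne_neg_swap i i'

theorem Identifies.two_mul_le_three_pow_sub_three (hI : Identifies M) (hS : IsScheme M)
    (hB : IsBalanced M) (j : Fin k) : 2 * n ≤ 3 ^ k - 3 := by
  have hzero := hI.two_mul_card_filter_le hS (· j = 0) (by simp)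
  have hnonzero := hI.two_mul_card_filter_le hS (· j ≠ 0) (by simp)
  simp only [Function.swap] at hzero hnonzero
  have hsplit_coins := card_filter_add_card_filter_not (s := univ) fun i : Fin n => M j i = 0
  have hsplit_vectors := card_filter_add_card_filter_not (s := (signVectors k).erase 0)
    fun v : Fin k → ℤ => v j = 0
  have hzero_vectors : #{v ∈ (signVectors k).erase 0 | v j = 0} = 3 ^ (k - 1) - 1 := by
    rw [filter_erase, card_erase_of_mem (by simp [signVectors]),
      card_signVectors_filter_eq_zero]
  rw [card_erase_of_mem (by simp [signVectors]), card_signVectors] at hsplit_vectors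
  rw [card_univ, Fintype.card_fin] at hsplit_coins
  obtain ⟨m, heven⟩ := hB.even_card_ne_zero hS j
  obtain ⟨r, hodd⟩ : Odd (3 ^ (k - 1)) := Odd.pow (by decide)
  have hpow : 3 ^ k = 3 * 3 ^ (k - 1) := by
    rw [← pow_succ', Nat.sub_add_cancel j.pos]
  simp only [ne_eq] at hnonzero heven
  omega

end Weighing

/-- For every k ≥ 1, any number of coins admitting an identifying balanced
weighing scheme with k weighings is at most (3 ^ k - 3) / 2. -/
theorem coins_le (k : ℕ) (hk : 1 ≤ k) (n : ℕ)
    (h : ∃ M : Fin k → Fin n → ℤ, IsScheme M ∧ IsBalanced M ∧ Identifies M) :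
    n ≤ (3 ^ k - 3) / 2 := by
  obtain ⟨M, hS, hB, hI⟩ := h
  have := hI.two_mul_le_three_pow_sub_three hS hB ⟨0, hk⟩
  omega
end

section
/- For every natural number k ≥ 2, there exists an injective function v : Fin ((3 ^ k - 3) / 2) → (Fin k → ℤ) such that: every v i belongs to S k; no value is the negation of another or of itself (v i ≠ -(v i') for all i, i'); and for every coordinate j : Fin k, the number of indices i with (v i) j = 1 equals the number of indices i with (v i) j = -1. That is, the antipodal pairs of S k admit a coordinate-balanced system of representatives. -/
/-- A sign vector of length k: each entry lies in {-1, 0, 1}. -/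
def IsSignVec {k : ℕ} (v : Fin k → ℤ) : Prop :=
  ∀ j, v j ∈ ({-1, 0, 1} : Set ℤ)

/-- The set of sign vectors of length k that are neither zero nor the constant
vector 1 nor the constant vector -1. -/
def Sset (k : ℕ) : Set (Fin k → ℤ) :=
  {v | IsSignVec v ∧ v ≠ 0 ∧ v ≠ (fun _ => 1) ∧ v ≠ (fun _ => -1)}

open Finset

lemma neg_snoc {k : ℕ} (y : Fin k → ℤ) (b : ℤ) :
    -(Fin.snoc y b) = (Fin.snoc (-y) (-b) : Fin (k + 1) → ℤ) := by
  funext j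
  refine Fin.lastCases ?_ ?_ j <;> simp

lemma snoc_inj {k : ℕ} : Function.Injective
    (fun p : (Fin k → ℤ) × ℤ => (Fin.snoc p.1 p.2 : Fin (k + 1) → ℤ)) := by
  intro p q h
  have h1 : p.1 = q.1 := by
    have := congrArg Fin.init h; simpa using this
  have h2 : p.2 = q.2 := by
    have := congrFun h (Fin.last k); simpa using this
  exact Prod.ext h1 h2

lemma snoc_apply_zero' {k : ℕ} (hk0 : 0 < k) (x : Fin k → ℤ) (a : ℤ) :
    (Fin.snoc x a : Fin (k + 1) → ℤ) 0 = x ⟨0, hk0⟩ := by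
  have h : (0 : Fin (k + 1)) = Fin.castSucc ⟨0, hk0⟩ := by
    apply Fin.ext; simp
  rw [h, Fin.snoc_castSucc]

lemma snoc_inj' {k : ℕ} {x y : Fin k → ℤ} {a b : ℤ}
    (h : (Fin.snoc x a : Fin (k + 1) → ℤ) = Fin.snoc y b) : x = y ∧ a = b := by
  constructor
  · have := congrArg Fin.init h; simpa using this
  · have := congrFun h (Fin.last k); simpa using this

lemma count_aux {n : ℕ} (g : Fin n → ℤ)
    (h : ∀ i, g i = -1 ∨ g i = 0 ∨ g i = 1) (hs : ∑ i, g i = 0) :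
    (Finset.univ.filter (fun i => g i = 1)).card =
    (Finset.univ.filter (fun i => g i = -1)).card := by
  classical
  have key : ∑ i, g i =
      ((Finset.univ.filter (fun i => g i = 1)).card : ℤ)
      - ((Finset.univ.filter (fun i => g i = -1)).card : ℤ) := by
    rw [← Finset.sum_boole, ← Finset.sum_boole, ← Finset.sum_sub_distrib]
    refine Finset.sum_congr rfl fun i _ => ?_
    rcases h i with hi | hi | hi <;> simp [hi]
  rw [hs] at key
  have : ((Finset.univ.filter (fun i => g i = 1)).card : ℤ) =
      ((Finset.univ.filter (fun i => g i = -1)).card : ℤ) := by linarith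
  exact_mod_cast this

lemma exists_good : ∀ k : ℕ, 2 ≤ k →
    ∃ T : Finset (Fin k → ℤ),
      T.card = (3 ^ k - 3) / 2 ∧
      (∀ v ∈ T, v ∈ Sset k) ∧
      (∀ v ∈ T, ∀ w ∈ T, v ≠ -w) ∧
      (∀ j, ∑ v ∈ T, v j = 0) := by
  intro k hk
  induction k, hk using Nat.le_induction with
  | base =>
    refine ⟨{![1,-1], ![-1,0], ![0,1]}, by decide, ?_, by decide, by decide⟩
    intro v hv
    fin_cases hv <;>
      refine ⟨fun j => ?_, by decide, by decide, by decide⟩ <;>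
      fin_cases j <;> simp
  | succ k hk ih =>
    obtain ⟨T, hcard, hmem, hanti, hsum⟩ := ih
    classical
    have hk0 : 0 < k := by omega
    -- constants are not in T
    have hT0 : (0 : Fin k → ℤ) ∉ T := fun h => (hmem _ h).2.1 rfl
    have hT1 : (fun _ : Fin k => (1 : ℤ)) ∉ T := fun h => (hmem _ h).2.2.1 rfl
    have hTm1 : (fun _ : Fin k => (-1 : ℤ)) ∉ T := fun h => (hmem _ h).2.2.2 rfl
    set e1 : Fin (k+1) → ℤ := Fin.snoc (0 : Fin k → ℤ) 1 with he1
    set e2 : Fin (k+1) → ℤ := Fin.snoc (fun _ => (1:ℤ)) (-1) with he2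
    set e3 : Fin (k+1) → ℤ := Fin.snoc (fun _ => (-1:ℤ)) 0 with he3
    set E : Finset (Fin (k+1) → ℤ) := {e1, e2, e3} with hE
    set A : Finset (Fin (k+1) → ℤ) :=
      (T ×ˢ ({-1, 0, 1} : Finset ℤ)).image (fun p => Fin.snoc p.1 p.2) with hA
    have hmemA : ∀ v, v ∈ A ↔
        ∃ x ∈ T, ∃ a ∈ ({-1,0,1} : Finset ℤ), v = Fin.snoc x a := by
      intro v
      simp only [hA, Finset.mem_image, Finset.mem_product]
      constructor
      · rintro ⟨⟨x, a⟩, ⟨hx, ha⟩, rfl⟩; exact ⟨x, hx, a, ha, rfl⟩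
      · rintro ⟨x, hx, a, ha, rfl⟩; exact ⟨(x, a), ⟨hx, ha⟩, rfl⟩
    -- distinct constants
    have hc01 : (0 : Fin k → ℤ) ≠ fun _ => (1:ℤ) := fun h => by
      have := congrFun h ⟨0, hk0⟩; simp at this
    have hc0m1 : (0 : Fin k → ℤ) ≠ fun _ => (-1:ℤ) := fun h => by
      have := congrFun h ⟨0, hk0⟩; simp at this
    have hc1m1 : (fun _ : Fin k => (1:ℤ)) ≠ fun _ => (-1:ℤ) := fun h => by
      have := congrFun h ⟨0, hk0⟩; simp at this
    have hE12 : e1 ≠ e2 := fun h => by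
      have := congrFun h (Fin.last k); simp [he1, he2] at this
    have hE13 : e1 ≠ e3 := fun h => by
      have := congrFun h (Fin.last k); simp [he1, he3] at this
    have hE23 : e2 ≠ e3 := fun h => by
      have := congrFun h (Fin.last k); simp [he2, he3] at this
    have hinitA : ∀ v ∈ A, Fin.init v ∈ T := by
      intro v hv
      obtain ⟨x, hx, a, ha, rfl⟩ := (hmemA v).1 hv
      simpa using hx
    have hdisj : Disjoint A E := by
      rw [Finset.disjoint_right]
      intro v hv hvA
      have := hinitA v hvA
      simp only [hE, Finset.mem_insert, Finset.mem_singleton] at hv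
      rcases hv with rfl | rfl | rfl
      · rw [he1] at this; simp at this; exact hT0 this
      · rw [he2] at this; simp at this; exact hT1 this
      · rw [he3] at this; simp at this; exact hTm1 this
    refine ⟨A ∪ E, ?_, ?_, ?_, ?_⟩
    · -- cardinality
      rw [Finset.card_union_of_disjoint hdisj]
      have hcA : A.card = T.card * 3 := by
        rw [hA, Finset.card_image_of_injective _ snoc_inj, Finset.card_product]
        congr 1
      have hcE : E.card = 3 := by
        rw [hE]
        rw [Finset.card_insert_of_notMem (by simp [hE12, hE13]),
          Finset.card_insert_of_notMem (by simp [hE23]), Finset.card_singleton]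
      have h3k : 3 ≤ 3 ^ k := by
        calc 3 = 3 ^ 1 := rfl
        _ ≤ 3 ^ k := Nat.pow_le_pow_right (by norm_num) (by omega)
      have hmod : 3 ^ k % 2 = 1 := by
        rw [Nat.pow_mod]; simp
      have hpow : 3 ^ (k+1) = 3 * 3 ^ k := by ring
      rw [hcA, hcE, hcard]
      omega
    · -- membership in Sset
      intro v hv
      rcases Finset.mem_union.1 hv with hv | hv
      · obtain ⟨x, hx, a, ha, rfl⟩ := (hmemA v).1 hv
        obtain ⟨hsv, hx0, hx1, hxm1⟩ := hmem x hx
        refine ⟨fun j => ?_, fun h => hx0 ?_, fun h => hx1 ?_, fun h => hxm1 ?_⟩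
        · refine Fin.lastCases ?_ ?_ j
          · simp only [Fin.snoc_last]
            simp only [Finset.mem_insert, Finset.mem_singleton] at ha
            simpa using ha
          · intro i; simpa using hsv i
        all_goals
          funext i
          have := congrFun h (Fin.castSucc i)
          simpa using this
      · simp only [hE, Finset.mem_insert, Finset.mem_singleton] at hv
        rcases hv with rfl | rfl | rfl
        · refine ⟨fun j => ?_, fun h => ?_, fun h => ?_, fun h => ?_⟩
          · refine Fin.lastCases ?_ (fun i => ?_) j <;> simp [he1]
          · have := congrFun h (Fin.last k); simp [he1, snoc_apply_zero' hk0] at this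
          · have := congrFun h (Fin.castSucc ⟨0, hk0⟩); simp [he1, snoc_apply_zero' hk0] at this
          · have := congrFun h (Fin.last k); simp [he1, snoc_apply_zero' hk0] at this
        · refine ⟨fun j => ?_, fun h => ?_, fun h => ?_, fun h => ?_⟩
          · refine Fin.lastCases ?_ (fun i => ?_) j <;> simp [he2]
          · have := congrFun h (Fin.castSucc ⟨0, hk0⟩); simp [he2, snoc_apply_zero' hk0] at this
          · have := congrFun h (Fin.last k); simp [he2, snoc_apply_zero' hk0] at this
          · have := congrFun h (Fin.castSucc ⟨0, hk0⟩); simp [he2, snoc_apply_zero' hk0] at this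
        · refine ⟨fun j => ?_, fun h => ?_, fun h => ?_, fun h => ?_⟩
          · refine Fin.lastCases ?_ (fun i => ?_) j <;> simp [he3]
          · have := congrFun h (Fin.castSucc ⟨0, hk0⟩); simp [he3, snoc_apply_zero' hk0] at this
          · have := congrFun h (Fin.castSucc ⟨0, hk0⟩); simp [he3, snoc_apply_zero' hk0] at this
          · have := congrFun h (Fin.last k); simp [he3, snoc_apply_zero' hk0] at this
    · -- antipodal-free
      intro v hv w hw h
      -- write each of v, w as snoc
      have getform : ∀ u ∈ A ∪ E, ∃ x a, u = Fin.snoc x a ∧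
          (x ∈ T ∨ (x = 0 ∧ a = 1) ∨ (x = (fun _ => (1:ℤ)) ∧ a = -1)
            ∨ (x = (fun _ => (-1:ℤ)) ∧ a = 0)) := by
        intro u hu
        rcases Finset.mem_union.1 hu with hu | hu
        · obtain ⟨x, hx, a, _, rfl⟩ := (hmemA u).1 hu
          exact ⟨x, a, rfl, Or.inl hx⟩
        · simp only [hE, Finset.mem_insert, Finset.mem_singleton] at hu
          rcases hu with rfl | rfl | rfl
          · exact ⟨_, _, he1, Or.inr (Or.inl ⟨rfl, rfl⟩)⟩
          · exact ⟨_, _, he2, Or.inr (Or.inr (Or.inl ⟨rfl, rfl⟩))⟩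
          · exact ⟨_, _, he3, Or.inr (Or.inr (Or.inr ⟨rfl, rfl⟩))⟩
      obtain ⟨x, a, rfl, hx⟩ := getform v hv
      obtain ⟨y, b, rfl, hy⟩ := getform w hw
      rw [neg_snoc] at h
      obtain ⟨hxy, hab⟩ := snoc_inj' h
      -- y can't be in T if x constant-ish, etc.
      rcases hx with hxT | hxc
      · rcases hy with hyT | hyc
        · exact hanti x hxT y hyT hxy
        · rcases hyc with ⟨rfl, rfl⟩ | ⟨rfl, rfl⟩ | ⟨rfl, rfl⟩
          · rw [neg_zero] at hxy; exact hT0 (hxy ▸ hxT)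
          · have : x = fun _ : Fin k => (-1:ℤ) := by
              rw [hxy]; funext i; simp
            exact hTm1 (this ▸ hxT)
          · have : x = fun _ : Fin k => (1:ℤ) := by
              rw [hxy]; funext i; simp
            exact hT1 (this ▸ hxT)
      · rcases hy with hyT | hyc
        · have hyx : y = -x := by rw [hxy]; simp
          rcases hxc with ⟨rfl, rfl⟩ | ⟨rfl, rfl⟩ | ⟨rfl, rfl⟩
          · rw [neg_zero] at hyx; exact hT0 (hyx ▸ hyT)
          · have : y = fun _ : Fin k => (-1:ℤ) := by
              rw [hyx]; funext i; simp
            exact hTm1 (this ▸ hyT)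
          · have : y = fun _ : Fin k => (1:ℤ) := by
              rw [hyx]; funext i; simp
            exact hT1 (this ▸ hyT)
        · rcases hxc with ⟨rfl, rfl⟩ | ⟨rfl, rfl⟩ | ⟨rfl, rfl⟩ <;>
            rcases hyc with ⟨rfl, rfl⟩ | ⟨rfl, rfl⟩ | ⟨rfl, rfl⟩ <;>
            (have hcc := congrFun hxy ⟨0, hk0⟩; simp at hcc hab)
    · -- sums vanish
      intro j
      rw [Finset.sum_union hdisj]
      have hsumE : ∑ v ∈ E, v j = e1 j + e2 j + e3 j := by
        rw [hE, Finset.sum_insert (by simp [hE12, hE13]),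
          Finset.sum_insert (by simp [hE23]), Finset.sum_singleton]
        ring
      have hsumA : ∑ v ∈ A, v j =
          ∑ x ∈ T, ∑ a ∈ ({-1,0,1} : Finset ℤ), (Fin.snoc x a : Fin (k+1) → ℤ) j := by
        rw [hA, Finset.sum_image (fun p _ q _ hpq => snoc_inj hpq)]
        rw [Finset.sum_product]
      rw [hsumA, hsumE]
      refine Fin.lastCases ?_ ?_ j
      · simp only [he1, he2, he3, Fin.snoc_last]
        norm_num
      · intro i
        simp only [he1, he2, he3, Fin.snoc_castSucc]
        have : ∀ x : Fin k → ℤ, ∑ a ∈ ({-1,0,1} : Finset ℤ), x i = 3 * x i := by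
          intro x
          rw [Finset.sum_const]
          norm_num
        rw [Finset.sum_congr rfl (fun x _ => this x), ← Finset.mul_sum, hsum i]
        simp

/-- For k ≥ 2, the antipodal pairs of S k admit a coordinate-balanced system of
representatives. -/
theorem exists_balanced_representatives (k : ℕ) (hk : 2 ≤ k) :
    ∃ v : Fin ((3 ^ k - 3) / 2) → (Fin k → ℤ),
      Function.Injective v ∧
      (∀ i, v i ∈ Sset k) ∧
      (∀ i i', v i ≠ -(v i')) ∧
      (∀ j : Fin k,
        (Finset.univ.filter (fun i => v i j = 1)).card =
        (Finset.univ.filter (fun i => v i j = -1)).card) := by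
  classical
  obtain ⟨T, hcard, hmem, hanti, hsum⟩ := exists_good k hk
  have hN : T.card = (3 ^ k - 3) / 2 := hcard
  let e : Fin ((3 ^ k - 3) / 2) ≃ {x // x ∈ T} :=
    (finCongr hN.symm).trans T.equivFin.symm
  refine ⟨fun i => (e i : Fin k → ℤ), ?_, ?_, ?_, ?_⟩
  · intro i i' h
    exact e.injective (Subtype.ext h)
  · intro i; exact hmem _ (e i).2
  · intro i i'; exact hanti _ (e i).2 _ (e i').2
  · intro j
    have hsv : ∀ i, (e i : Fin k → ℤ) j = -1 ∨ (e i : Fin k → ℤ) j = 0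
        ∨ (e i : Fin k → ℤ) j = 1 := by
      intro i
      have := (hmem _ (e i).2).1 j
      simpa [Set.mem_insert_iff] using this
    refine count_aux _ hsv ?_
    have : ∑ i, ((e i : Fin k → ℤ)) j = ∑ x ∈ T, x j := by
      rw [Equiv.sum_comp e (fun x : {x // x ∈ T} => (x : Fin k → ℤ) j),
        Finset.sum_coe_sort T (fun x => x j)]
    rw [this, hsum j]
end
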